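/- Quantum no-cloning theorem: there is no unitary operator U on H ⊗ H and fixed unit vector e ∈ H such that U(ψ ⊗ e) = ψ ⊗ ψ for all unit vectors ψ ∈ H, provided dim H ≥ 2. -/

import Mathlib

/-!
A unitary preserves inner products. Since `⟪ψ ⊗ e, χ ⊗ e⟫ = ⟪ψ, χ⟫` and
`⟪ψ ⊗ ψ, χ ⊗ χ⟫ = ⟪ψ, χ⟫ ^ 2`, a cloning unitary forces `⟪ψ, χ⟫ ∈ {0, 1}` for all unit
vectors `ψ, χ`. Once `dim H ≥ 2` this fails, e.g. for `ψ = u` and `χ = (3/5) u + (4/5) v`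
with `u, v` orthonormal.
-/

open scoped InnerProductSpace

namespace EuclideanSpace

variable {𝕜 : Type*} [RCLike 𝕜] {ι κ : Type*} [Fintype ι] [Fintype κ]

noncomputable def tensor (x : EuclideanSpace 𝕜 ι) (y : EuclideanSpace 𝕜 κ) :
    EuclideanSpace 𝕜 (ι × κ) :=
  WithLp.toLp 2 fun q => x q.1 * y q.2

theorem inner_tensor_tensor (x x' : EuclideanSpace 𝕜 ι) (y y' : EuclideanSpace 𝕜 κ) :
    ⟪tensor x y, tensor x' y'⟫_𝕜 = ⟪x, x'⟫_𝕜 * ⟪y, y'⟫_𝕜 := by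
  simp only [tensor, PiLp.inner_apply, RCLike.inner_apply, Fintype.sum_prod_type,
    Finset.sum_mul_sum, map_mul]
  refine Finset.sum_congr rfl fun i _ => Finset.sum_congr rfl fun j _ => ?_
  ring

theorem inner_sq_eq_inner_of_clones (U : EuclideanSpace 𝕜 (ι × κ) →ₗᵢ[𝕜] EuclideanSpace 𝕜 (ι × ι))
    {e : EuclideanSpace 𝕜 κ} (he : ‖e‖ = 1) {ψ χ : EuclideanSpace 𝕜 ι}
    (hψ : U (tensor ψ e) = tensor ψ ψ) (hχ : U (tensor χ e) = tensor χ χ) :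
    ⟪ψ, χ⟫_𝕜 ^ 2 = ⟪ψ, χ⟫_𝕜 := by
  have hee : ⟪e, e⟫_𝕜 = 1 := by simp [inner_self_eq_norm_sq_to_K, he]
  calc ⟪ψ, χ⟫_𝕜 ^ 2 = ⟪tensor ψ ψ, tensor χ χ⟫_𝕜 := by rw [inner_tensor_tensor, sq]
    _ = ⟪tensor ψ e, tensor χ e⟫_𝕜 := by rw [← hψ, ← hχ, U.inner_map_map]
    _ = ⟪ψ, χ⟫_𝕜 := by rw [inner_tensor_tensor, hee, mul_one]

end EuclideanSpace

theorem exists_norm_eq_one_inner_ne_zero_ne_one {𝕜 E : Type*} [RCLike 𝕜]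
    [NormedAddCommGroup E] [InnerProductSpace 𝕜 E] [FiniteDimensional 𝕜 E]
    (h : 2 ≤ Module.finrank 𝕜 E) :
    ∃ ψ χ : E, ‖ψ‖ = 1 ∧ ‖χ‖ = 1 ∧ ⟪ψ, χ⟫_𝕜 ≠ 0 ∧ ⟪ψ, χ⟫_𝕜 ≠ 1 := by
  set b := stdOrthonormalBasis 𝕜 E
  set u := b ⟨0, by omega⟩
  set v := b ⟨1, by omega⟩
  have hu : ‖u‖ = 1 := b.orthonormal.1 _
  have huv : ⟪u, v⟫_𝕜 = 0 := b.inner_eq_zero (by simp [Fin.ext_iff])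
  have huu : ⟪u, u⟫_𝕜 = 1 := b.inner_eq_one _
  have hvv : ⟪v, v⟫_𝕜 = 1 := b.inner_eq_one _
  set χ := (3 / 5 : 𝕜) • u + (4 / 5 : 𝕜) • v
  have hχχ : ⟪χ, χ⟫_𝕜 = 1 := by
    simp only [χ, inner_add_left, inner_add_right, inner_smul_left, inner_smul_right, huv,
      inner_eq_zero_symm.mp huv, huu, hvv, map_div₀, map_ofNat]
    norm_num
  have huχ : ⟪u, χ⟫_𝕜 = 3 / 5 := by
    simp only [χ, inner_add_right, inner_smul_right, huv, huu]
    norm_num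
  refine ⟨u, χ, hu, ?_, by norm_num [huχ], by norm_num [huχ]⟩
  rw [inner_self_eq_norm_sq_to_K] at hχχ
  exact (pow_eq_one_iff_of_nonneg (norm_nonneg χ) two_ne_zero).mp (by exact_mod_cast hχχ)

/-- Quantum no-cloning: there is no unitary `U` on `H ⊗ H` (modelled as
`EuclideanSpace ℂ (Fin n × Fin n)`) and unit vector `e` with
`U (ψ ⊗ e) = ψ ⊗ ψ` for all unit vectors `ψ`, when `dim H = n ≥ 2`. -/
theorem no_cloning (n : ℕ) (hn : 2 ≤ n) :
    ¬ ∃ (U : EuclideanSpace ℂ (Fin n × Fin n) ≃ₗᵢ[ℂ] EuclideanSpace ℂ (Fin n × Fin n))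
        (e : EuclideanSpace ℂ (Fin n)), ‖e‖ = 1 ∧
        ∀ ψ : EuclideanSpace ℂ (Fin n), ‖ψ‖ = 1 →
          U (WithLp.toLp 2 (fun q : Fin n × Fin n => ψ q.1 * e q.2))
            = WithLp.toLp 2 (fun q : Fin n × Fin n => ψ q.1 * ψ q.2) := by
  rintro ⟨U, e, he, hU⟩
  obtain ⟨ψ, χ, hψ, hχ, hne_zero, hne_one⟩ :=
    exists_norm_eq_one_inner_ne_zero_ne_one (𝕜 := ℂ) (E := EuclideanSpace ℂ (Fin n))
      (by rwa [finrank_euclideanSpace_fin])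
  have hidem := EuclideanSpace.inner_sq_eq_inner_of_clones U.toLinearIsometry he
    (hU ψ hψ) (hU χ hχ)
  exact (eq_zero_or_one_of_sq_eq_self hidem).elim hne_zero hne_one
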